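/- arXiv:2504.04330 — 11 statements merged into one kernel-verified Lean document; each statement's English description precedes it below -/
import Mathlib

section
/- Let φ be a C¹ convex function on an open convex set C and f a C¹ function on C. Then (f, φ) is L-smooth adaptable on C (i.e., both Lφ − f and Lφ + f are convex on C) if and only if for all x, y ∈ C, |f(x) − f(y) − ⟨∇f(y), x − y⟩| ≤ L·D_φ(x, y). -/
open Set
open scoped RealInnerProductSpace

noncomputable def bregman {n : ℕ} (φ : EuclideanSpace ℝ (Fin n) → ℝ)
    (φ' : EuclideanSpace ℝ (Fin n) → EuclideanSpace ℝ (Fin n))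
    (x y : EuclideanSpace ℝ (Fin n)) : ℝ :=
  φ x - φ y - ⟪φ' y, x - y⟫

/-!
A differentiable function on a convex set is convex iff it lies above its tangent planes,
`g y + Dg(y)(x - y) ≤ g x`. For `g = Lφ ∓ f` the two tangent-plane inequalities are, after
rearranging, `±(f x - f y - ⟪∇f y, x - y⟫) ≤ L · D_φ(x, y)`, which together are the descent bound.
-/

section FirstOrder

variable {E : Type*} [NormedAddCommGroup E] [NormedSpace ℝ E] {s : Set E} {f : E → ℝ}

theorem ConvexOn.add_fderiv_le {f' : E →L[ℝ] ℝ} {x y : E} (hf : ConvexOn ℝ s f)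
    (hx : x ∈ s) (hy : y ∈ s) (hf' : HasFDerivAt f f' y) : f y + f' (x - y) ≤ f x := by
  set γ : ℝ →ᵃ[ℝ] E := AffineMap.lineMap y x
  have hγ : HasDerivAt (f ∘ γ) (f' (x - y)) 0 :=
    HasFDerivAt.comp_hasDerivAt (l := f) 0 (by simpa [γ] using hf') AffineMap.hasDerivAt_lineMap
  have hslope := (hf.comp_affineMap γ).le_slope_of_hasDerivAt (x := 0) (y := 1)
    (by simpa [γ] using hy) (by simpa [γ] using hx) zero_lt_one hγ
  simp only [slope_def_field, Function.comp_apply, γ, AffineMap.lineMap_apply_one,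
    AffineMap.lineMap_apply_zero, sub_zero, div_one] at hslope
  linarith

theorem ConvexOn.of_add_fderiv_le (hs : Convex ℝ s) (f' : E → E →L[ℝ] ℝ)
    (h : ∀ x ∈ s, ∀ y ∈ s, f y + f' y (x - y) ≤ f x) : ConvexOn ℝ s f := by
  refine ⟨hs, fun x hx y hy a b ha hb hab => ?_⟩
  set z := a • x + b • y
  have hz : z ∈ s := hs hx hy ha hb hab
  have hcancel : a * f' z (x - z) + b * f' z (y - z) = 0 := by
    rw [← smul_eq_mul, ← smul_eq_mul, ← map_smul, ← map_smul, ← map_add, smul_sub, smul_sub,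
      sub_add_sub_comm, ← add_smul, hab, one_smul, sub_self, map_zero]
  have hx' := mul_le_mul_of_nonneg_left (h x hx z hz) ha
  have hy' := mul_le_mul_of_nonneg_left (h y hy z hz) hb
  calc f z = a * (f z + f' z (x - z)) + b * (f z + f' z (y - z)) := by
        linear_combination (-(f z)) * hab - hcancel
    _ ≤ a • f x + b • f y := add_le_add hx' hy'

theorem convexOn_iff_forall_add_fderiv_le (hs : Convex ℝ s) {f' : E → E →L[ℝ] ℝ}
    (hf' : ∀ x ∈ s, HasFDerivAt f (f' x) x) :
    ConvexOn ℝ s f ↔ ∀ x ∈ s, ∀ y ∈ s, f y + f' y (x - y) ≤ f x :=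
  ⟨fun hf _ hx y hy => hf.add_fderiv_le hx hy (hf' y hy), ConvexOn.of_add_fderiv_le hs f'⟩

end FirstOrder

theorem smooth_adaptable_iff_descent_general {n : ℕ}
    (C : Set (EuclideanSpace ℝ (Fin n))) (hCconv : Convex ℝ C)
    (φ f : EuclideanSpace ℝ (Fin n) → ℝ)
    (φ' f' : EuclideanSpace ℝ (Fin n) → EuclideanSpace ℝ (Fin n))
    (hφ' : ∀ x ∈ C, HasGradientAt φ (φ' x) x)
    (hf' : ∀ x ∈ C, HasGradientAt f (f' x) x)
    (L : ℝ) :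
    (ConvexOn ℝ C (fun x => L * φ x - f x) ∧ ConvexOn ℝ C (fun x => L * φ x + f x)) ↔
      (∀ x ∈ C, ∀ y ∈ C, |f x - f y - ⟪f' y, x - y⟫| ≤ L * bregman φ φ' x y) := by
  rw [convexOn_iff_forall_add_fderiv_le (f := fun x => L * φ x - f x) hCconv fun x hx =>
      ((hφ' x hx).hasFDerivAt.const_mul L).sub (hf' x hx).hasFDerivAt,
    convexOn_iff_forall_add_fderiv_le (f := fun x => L * φ x + f x) hCconv fun x hx =>
      ((hφ' x hx).hasFDerivAt.const_mul L).add (hf' x hx).hasFDerivAt]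
  simp only [sub_apply, add_apply, smul_apply, InnerProductSpace.toDual_apply_apply,
    smul_eq_mul, bregman, abs_le, ← forall_and]
  refine forall₂_congr fun x _ => forall₂_congr fun y _ => ?_
  constructor <;> rintro ⟨h₁, h₂⟩ <;> constructor <;> linarith

/-- the extended descent lemma. `(f, φ)` is `L`-smooth adaptable on the
open convex set `C` (i.e. `Lφ - f` and `Lφ + f` are convex on `C`) iff
`|f x - f y - ⟨∇f y, x - y⟩| ≤ L · D_φ(x, y)` for all `x, y ∈ C`. -/
theorem smooth_adaptable_iff_descent {n : ℕ}
    (C : Set (EuclideanSpace ℝ (Fin n))) (hC : IsOpen C) (hCconv : Convex ℝ C)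
    (φ f : EuclideanSpace ℝ (Fin n) → ℝ)
    (φ' f' : EuclideanSpace ℝ (Fin n) → EuclideanSpace ℝ (Fin n))
    (hφ : ConvexOn ℝ C φ)
    (hφ' : ∀ x ∈ C, HasGradientAt φ (φ' x) x)
    (hf' : ∀ x ∈ C, HasGradientAt f (f' x) x)
    (L : ℝ) (hL : 0 < L) :
    (ConvexOn ℝ C (fun x => L * φ x - f x) ∧ ConvexOn ℝ C (fun x => L * φ x + f x)) ↔
      (∀ x ∈ C, ∀ y ∈ C, |f x - f y - ⟪f' y, x - y⟫| ≤ L * bregman φ φ' x y) :=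
  smooth_adaptable_iff_descent_general C hCconv φ f φ' f' hφ' hf' L
end

section
/- Let (f, φ) be L-smooth adaptable on an open convex set C, where φ is strictly convex and satisfies D_φ((1−γ)x + γv, x) ≤ γ^{1+ν} D_φ(v, x) for some ν > 0 and all γ ∈ [0,1]. Then for x, v ∈ C and γ ∈ [0,1], setting x₊ = (1−γ)x + γv, it holds that f(x) − f(x₊) ≥ γ⟨∇f(x), x − v⟩ − L γ^{1+ν} D_φ(v, x). -/
/-!
The convexity of `L φ - f` gives, through its first-order characterisation at `x`,
`f x - f y ≥ ⟪∇f x, x - y⟫ - L D_φ(y, x)` for every `y ∈ C`. Taking `y = x₊`, where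
`x - x₊ = γ (x - v)`, and bounding `D_φ(x₊, x)` by the scaling hypothesis gives the claim.
-/

open Set
open scoped RealInnerProductSpace

theorem ConvexOn.apply_sub_le_sub_of_hasFDerivAt {E : Type*} [NormedAddCommGroup E]
    [NormedSpace ℝ E] {s : Set E} {g : E → ℝ} {g' : E →L[ℝ] ℝ} {x y : E}
    (hg : ConvexOn ℝ s g) (hx : x ∈ s) (hy : y ∈ s) (hd : HasFDerivAt g g' x) :
    g' (y - x) ≤ g y - g x := by
  have hline : ConvexOn ℝ (Icc 0 1) (g ∘ AffineMap.lineMap (k := ℝ) x y) :=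
    (hg.comp_affineMap _).subset (hg.1.mapsTo_lineMap hx hy) (convex_Icc 0 1)
  have hderiv : HasDerivAt (g ∘ AffineMap.lineMap (k := ℝ) x y) (g' (y - x)) 0 :=
    (by simpa using hd : HasFDerivAt g g' (AffineMap.lineMap x y (0 : ℝ))).comp_hasDerivAt 0
      AffineMap.hasDerivAt_lineMap
  simpa [slope_def_field] using
    hline.le_slope_of_hasDerivAt (left_mem_Icc.2 zero_le_one) (right_mem_Icc.2 zero_le_one)
      zero_lt_one hderiv

theorem ConvexOn.inner_sub_le_sub_add_mul_bregman {n : ℕ}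
    {C : Set (EuclideanSpace ℝ (Fin n))} {φ f : EuclideanSpace ℝ (Fin n) → ℝ}
    {φ' f' : EuclideanSpace ℝ (Fin n) → EuclideanSpace ℝ (Fin n)} {L : ℝ}
    {x y : EuclideanSpace ℝ (Fin n)}
    (hconv : ConvexOn ℝ C (fun z => L * φ z - f z)) (hx : x ∈ C) (hy : y ∈ C)
    (hφ : HasGradientAt φ (φ' x) x) (hf : HasGradientAt f (f' x) x) :
    ⟪f' x, x - y⟫ ≤ f x - f y + L * bregman φ φ' y x := by
  have hd := ((hasGradientAt_iff_hasFDerivAt.mp hφ).const_mul L).sub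
    (hasGradientAt_iff_hasFDerivAt.mp hf)
  have key := hconv.apply_sub_le_sub_of_hasFDerivAt hx hy hd
  simp only [sub_apply, smul_apply, InnerProductSpace.toDual_apply_apply, smul_eq_mul] at key
  rw [bregman, ← neg_sub y x, inner_neg_right]
  linarith

theorem primal_progress_smad_general {n : ℕ}
    (C : Set (EuclideanSpace ℝ (Fin n))) (hCconv : Convex ℝ C)
    (φ f : EuclideanSpace ℝ (Fin n) → ℝ)
    (φ' f' : EuclideanSpace ℝ (Fin n) → EuclideanSpace ℝ (Fin n))
    (hφ' : ∀ x ∈ C, HasGradientAt φ (φ' x) x)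
    (hf' : ∀ x ∈ C, HasGradientAt f (f' x) x)
    (L ν : ℝ) (hL : 0 < L)
    (hsmad : ConvexOn ℝ C (fun x => L * φ x - f x) ∧
      ConvexOn ℝ C (fun x => L * φ x + f x))
    (hscale : ∀ x ∈ C, ∀ v ∈ C, ∀ γ ∈ Icc (0:ℝ) 1,
      bregman φ φ' ((1 - γ) • x + γ • v) x ≤ γ ^ (1 + ν) * bregman φ φ' v x) :
    ∀ x ∈ C, ∀ v ∈ C, ∀ γ ∈ Icc (0:ℝ) 1,
      f x - f ((1 - γ) • x + γ • v) ≥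
        γ * ⟪f' x, x - v⟫ - L * γ ^ (1 + ν) * bregman φ φ' v x := by
  intro x hx v hv γ hγ
  have hstep : x - ((1 - γ) • x + γ • v) = γ • (x - v) := by module
  have hprogress := hsmad.1.inner_sub_le_sub_add_mul_bregman (y := (1 - γ) • x + γ • v) hx
    (hCconv hx hv (by linarith [hγ.2]) hγ.1 (by ring)) (hφ' x hx) (hf' x hx)
  rw [hstep, real_inner_smul_right] at hprogress
  have hdist := mul_le_mul_of_nonneg_left (hscale x hx v hv γ hγ) hL.le
  linarith

/-- primal progress from the smooth adaptable property. -/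
theorem primal_progress_smad {n : ℕ}
    (C : Set (EuclideanSpace ℝ (Fin n))) (hC : IsOpen C) (hCconv : Convex ℝ C)
    (φ f : EuclideanSpace ℝ (Fin n) → ℝ)
    (φ' f' : EuclideanSpace ℝ (Fin n) → EuclideanSpace ℝ (Fin n))
    (hφ : StrictConvexOn ℝ C φ)
    (hφ' : ∀ x ∈ C, HasGradientAt φ (φ' x) x)
    (hf' : ∀ x ∈ C, HasGradientAt f (f' x) x)
    (L ν : ℝ) (hL : 0 < L) (hν : 0 < ν)
    (hsmad : ConvexOn ℝ C (fun x => L * φ x - f x) ∧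
      ConvexOn ℝ C (fun x => L * φ x + f x))
    (hscale : ∀ x ∈ C, ∀ v ∈ C, ∀ γ ∈ Icc (0:ℝ) 1,
      bregman φ φ' ((1 - γ) • x + γ • v) x ≤ γ ^ (1 + ν) * bregman φ φ' v x) :
    ∀ x ∈ C, ∀ v ∈ C, ∀ γ ∈ Icc (0:ℝ) 1,
      f x - f ((1 - γ) • x + γ • v) ≥
        γ * ⟪f' x, x - v⟫ - L * γ ^ (1 + ν) * bregman φ φ' v x :=
  primal_progress_smad_general C hCconv φ f φ' f' hφ' hf' L ν hL hsmad hscale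
end

section
/- Under the L-smad property of (f, φ) with scaling exponent ν (i.e., f(x) − f(x₊) ≥ γ⟨∇f(x), x−v⟩ − Lγ^{1+ν}D_φ(v,x) for x₊ = (1−γ)x + γv), if 0 ≤ γ ≤ (⟨∇f(x), x − v⟩ / (L(1+ν) D_φ(v, x)))^{1/ν} with ⟨∇f(x), x − v⟩ ≥ 0, then f(x) − f(x₊) ≥ (ν/(1+ν)) · γ · ⟨∇f(x), x − v⟩. -/
open Set
open scoped RealInnerProductSpace

/-! The step-size bound says exactly `γ ^ ν ≤ g / (L (1 + ν) D)` with `g = ⟪∇f x, x - v⟫`, so the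
penalty `L γ ^ (1 + ν) D` of the descent inequality costs at most the fraction `1 / (1 + ν)` of
the linear gain `γ g`. -/

theorem mul_rpow_one_add_le_of_le_rpow_inv {c g ν γ : ℝ} (hν : 0 < ν) (hg : 0 ≤ g)
    (hγ : 0 ≤ γ) (hγle : γ ≤ (g / (c * (1 + ν))) ^ (1 / ν)) :
    c * γ ^ (1 + ν) ≤ γ * g / (1 + ν) := by
  rcases le_or_gt c 0 with hc | hc
  · calc c * γ ^ (1 + ν) ≤ 0 := mul_nonpos_of_nonpos_of_nonneg hc (by positivity)
      _ ≤ γ * g / (1 + ν) := by positivity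
  · have hpow : γ ^ ν ≤ g / (c * (1 + ν)) :=
      (Real.le_rpow_inv_iff_of_pos hγ (by positivity) hν).1 (by rwa [← one_div])
    calc c * γ ^ (1 + ν) = c * (γ * γ ^ ν) := by rw [Real.rpow_one_add' hγ (by positivity)]
      _ ≤ c * (γ * (g / (c * (1 + ν)))) := by gcongr
      _ = γ * g / (1 + ν) := by field_simp

theorem sub_mul_rpow_one_add_ge_of_le_rpow_inv {c g ν γ : ℝ} (hν : 0 < ν) (hg : 0 ≤ g)
    (hγ : 0 ≤ γ) (hγle : γ ≤ (g / (c * (1 + ν))) ^ (1 / ν)) :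
    ν / (1 + ν) * γ * g ≤ γ * g - c * γ ^ (1 + ν) := by
  have hpenalty := mul_rpow_one_add_le_of_le_rpow_inv hν hg hγ hγle
  have hsplit : ν / (1 + ν) * γ * g = γ * g - γ * g / (1 + ν) := by
    field_simp
    ring
  linarith

theorem bregman_short_step_progress_general {n : ℕ}
    (φ f : EuclideanSpace ℝ (Fin n) → ℝ)
    (φ' f' : EuclideanSpace ℝ (Fin n) → EuclideanSpace ℝ (Fin n))
    (x v : EuclideanSpace ℝ (Fin n))
    (L ν : ℝ) (hν : 0 < ν)
    (hg : 0 ≤ ⟪f' x, x - v⟫)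
    (hdescent : ∀ γ ∈ Icc (0:ℝ) 1,
      f x - f ((1 - γ) • x + γ • v) ≥
        γ * ⟪f' x, x - v⟫ - L * γ ^ (1 + ν) * bregman φ φ' v x)
    (γ : ℝ) (hγ : γ ∈ Icc (0:ℝ) 1)
    (hγle : γ ≤ (⟪f' x, x - v⟫ / (L * (1 + ν) * bregman φ φ' v x)) ^ (1 / ν)) :
    f x - f ((1 - γ) • x + γ • v) ≥ (ν / (1 + ν)) * γ * ⟪f' x, x - v⟫ := by
  rw [mul_right_comm] at hγle
  have hprogress := sub_mul_rpow_one_add_ge_of_le_rpow_inv hν hg hγ.1 hγle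
  have hstep := hdescent γ hγ
  linarith

/-- progress from the Bregman short step-size. If the descent inequality
`f x - f x₊ ≥ γ⟨∇f x, x - v⟩ - Lγ^(1+ν)D_φ(v,x)` holds (for `x₊ = (1-γ)x + γv`,
`γ ∈ [0,1]`), then for any step-size `γ` with
`0 ≤ γ ≤ (⟨∇f x, x - v⟩/(L(1+ν)D_φ(v,x)))^(1/ν)` (and `γ ≤ 1`),
`f x - f x₊ ≥ (ν/(1+ν)) γ ⟨∇f x, x - v⟩`. -/
theorem bregman_short_step_progress {n : ℕ}
    (φ f : EuclideanSpace ℝ (Fin n) → ℝ)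
    (φ' f' : EuclideanSpace ℝ (Fin n) → EuclideanSpace ℝ (Fin n))
    (x v : EuclideanSpace ℝ (Fin n))
    (L ν : ℝ) (hL : 0 < L) (hν : 0 < ν)
    (hD : 0 < bregman φ φ' v x)
    (hg : 0 ≤ ⟪f' x, x - v⟫)
    (hdescent : ∀ γ ∈ Icc (0:ℝ) 1,
      f x - f ((1 - γ) • x + γ • v) ≥
        γ * ⟪f' x, x - v⟫ - L * γ ^ (1 + ν) * bregman φ φ' v x)
    (γ : ℝ) (hγ : γ ∈ Icc (0:ℝ) 1)
    (hγle : γ ≤ (⟪f' x, x - v⟫ / (L * (1 + ν) * bregman φ φ' v x)) ^ (1 / ν)) :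
    f x - f ((1 - γ) • x + γ • v) ≥ (ν / (1 + ν)) * γ * ⟪f' x, x - v⟫ :=
  bregman_short_step_progress_general φ f φ' f' x v L ν hν hg hdescent γ hγ hγle
end

section
/- Let f be ρ-weakly convex and C¹ on a compact convex set P with unique minimizer x* and minimum f*, satisfying the local μ-quadratic growth condition on [f ≤ f* + ζ] ∩ P for some ζ > 0 (i.e., ‖x − x*‖² ≤ (2/μ)(f(x) − f*) there), with ρ < μ. Then for all x ∈ [f ≤ f* + ζ] ∩ P with x ≠ x*, f(x) − f* ≤ (2μ/(μ − ρ)²) · (⟨∇f(x), x − x*⟩ / ‖x − x*‖)². -/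
open Set
open scoped RealInnerProductSpace

/-- primal gap bound from the local quadratic growth condition for
a ρ-weakly convex function with unique minimizer. -/
theorem quadratic_growth_primal_gap {n : ℕ}
    (P : Set (EuclideanSpace ℝ (Fin n)))
    (hP : IsCompact P) (hPconv : Convex ℝ P) (hPne : P.Nonempty)
    (f : EuclideanSpace ℝ (Fin n) → ℝ)
    (f' : EuclideanSpace ℝ (Fin n) → EuclideanSpace ℝ (Fin n))
    (hf' : ∀ x ∈ P, HasGradientAt f (f' x) x)
    (ρ μ ζ : ℝ) (hρ : 0 ≤ ρ) (hρμ : ρ < μ) (hζ : 0 < ζ)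
    (hweak : ∀ x ∈ P, ∀ y ∈ P, f y - f x ≥ ⟪f' x, y - x⟫ - (ρ / 2) * ‖y - x‖ ^ 2)
    (xstar : EuclideanSpace ℝ (Fin n)) (hxstar : xstar ∈ P)
    (hmin : IsMinOn f P xstar)
    (huniq : ∀ y ∈ P, IsMinOn f P y → y = xstar)
    (hqg : ∀ x ∈ P, f x ≤ f xstar + ζ →
      ‖x - xstar‖ ^ 2 ≤ (2 / μ) * (f x - f xstar)) :
    ∀ x ∈ P, f x ≤ f xstar + ζ → x ≠ xstar →
      f x - f xstar ≤
        (2 * μ / (μ - ρ) ^ 2) * (⟪f' x, x - xstar⟫ / ‖x - xstar‖) ^ 2 := by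
  intro x hx hlev hne
  have hμ : 0 < μ := lt_of_le_of_lt hρ hρμ
  have hd : 0 < ‖x - xstar‖ := by
    rw [norm_pos_iff]
    exact sub_ne_zero.mpr hne
  set d := ‖x - xstar‖ with hdd
  set G := ⟪f' x, x - xstar⟫ with hG
  set g := f x - f xstar with hg
  have hw := hweak x hx xstar hxstar
  have hrw : ⟪f' x, xstar - x⟫ = -G := by
    rw [hG, ← inner_neg_right]
    congr 1
    abel
  have hnrw : ‖xstar - x‖ = d := by rw [hdd, norm_sub_rev]
  rw [hrw, hnrw] at hw
  -- hw : f xstar - f x ≥ -G - (ρ/2)*d^2, i.e. g ≤ G + (ρ/2)*d^2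
  have h1 : g ≤ G + (ρ / 2) * d ^ 2 := by simp only [hg]; linarith
  have h2 : μ * d ^ 2 ≤ 2 * g := by
    have := hqg x hx hlev
    rw [div_mul_eq_mul_div, le_div_iff₀ hμ] at this
    linarith
  have h3 : (μ - ρ) * d ^ 2 ≤ 2 * G := by nlinarith
  have hGpos : 0 < G := by nlinarith [sq_nonneg d, mul_pos (sub_pos.mpr hρμ) (pow_pos hd 2)]
  have hA : (0:ℝ) ≤ (μ - ρ) ^ 2 * d ^ 2 := by positivity
  have h1' : g * ((μ - ρ) ^ 2 * d ^ 2) ≤ (G + ρ / 2 * d ^ 2) * ((μ - ρ) ^ 2 * d ^ 2) :=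
    mul_le_mul_of_nonneg_right h1 hA
  have h4 : (μ - ρ) * d ^ 2 * ((μ - ρ) * G) ≤ 2 * G * ((μ - ρ) * G) :=
    mul_le_mul_of_nonneg_right h3
      (mul_nonneg (sub_pos.mpr hρμ).le hGpos.le)
  have h5 : ((μ - ρ) * d ^ 2) * ((μ - ρ) * d ^ 2) ≤ (2 * G) * (2 * G) :=
    mul_self_le_mul_self (mul_nonneg (sub_pos.mpr hρμ).le (sq_nonneg d)) h3
  have key : g * ((μ - ρ) ^ 2 * d ^ 2) ≤ 2 * μ * G ^ 2 := by nlinarith [h1', h4, h5]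
  have heq : (2 * μ / (μ - ρ) ^ 2) * (G / d) ^ 2 = (2 * μ * G ^ 2) / ((μ - ρ) ^ 2 * d ^ 2) := by
    field_simp
  have hApos : (0:ℝ) < (μ - ρ) ^ 2 * d ^ 2 :=
    mul_pos (pow_pos (sub_pos.mpr hρμ) 2) (pow_pos hd 2)
  rw [heq, le_div_iff₀ hApos]
  linarith
end

section
/- Let f be ρ-weakly convex and C¹ on a compact convex set P with unique minimizer x*, satisfying local μ-quadratic growth on [f ≤ f* + ζ] ∩ P with ρ < μ. Then for all x in this set, f(x) − f* ≤ (2μ/(μ − ρ)²)‖∇f(x)‖², i.e., f satisfies a local Polyak–Łojasiewicz inequality. -/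
/-!
Weak convexity between `x` and `x*` bounds the gap `D = f x - f*` by `‖∇f x‖ r + (ρ/2) r²`
with `r = ‖x - x*‖`, and quadratic growth `r² ≤ 2D/μ` absorbs the curvature term:
`(μ - ρ) D ≤ μ ‖∇f x‖ r`. Squaring and using quadratic growth once more gives
`(μ - ρ)² D² ≤ 2μ ‖∇f x‖² D`.
-/

open scoped RealInnerProductSpace

theorem sub_le_norm_mul_norm_add_of_weakly_convex {E : Type*} [NormedAddCommGroup E]
    [InnerProductSpace ℝ E] {a b ρ : ℝ} {g x y : E}
    (h : b - a ≥ ⟪g, y - x⟫ - (ρ / 2) * ‖y - x‖ ^ 2) :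
    a - b ≤ ‖g‖ * ‖x - y‖ + (ρ / 2) * ‖x - y‖ ^ 2 := by
  have hinner : -(‖g‖ * ‖y - x‖) ≤ ⟪g, y - x⟫ :=
    neg_le_of_abs_le (abs_real_inner_le_norm g (y - x))
  rw [norm_sub_rev x y]
  linarith

theorem sub_mul_le_of_quadratic_growth {D r g ρ μ : ℝ} (hρ : 0 ≤ ρ) (hμ : 0 < μ)
    (hupper : D ≤ g * r + (ρ / 2) * r ^ 2) (hgrowth : μ * r ^ 2 ≤ 2 * D) :
    (μ - ρ) * D ≤ μ * (g * r) := by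
  have hcurv : ρ * (μ * r ^ 2) ≤ ρ * (2 * D) := mul_le_mul_of_nonneg_left hgrowth hρ
  nlinarith [mul_le_mul_of_nonneg_left hupper hμ.le]

theorem le_mul_sq_of_weakly_convex_of_quadratic_growth {D r g ρ μ : ℝ} (hρ : 0 ≤ ρ)
    (hρμ : ρ < μ) (hupper : D ≤ g * r + (ρ / 2) * r ^ 2) (hgrowth : r ^ 2 ≤ (2 / μ) * D) :
    D ≤ (2 * μ / (μ - ρ) ^ 2) * g ^ 2 := by
  have hμ : 0 < μ := hρ.trans_lt hρμ
  have hgrowth' : μ * r ^ 2 ≤ 2 * D := by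
    rw [div_mul_eq_mul_div, le_div_iff₀ hμ] at hgrowth
    linarith
  have hD : 0 ≤ D := by nlinarith [sq_nonneg r]
  have hlin := sub_mul_le_of_quadratic_growth hρ hμ hupper hgrowth'
  have hsq : ((μ - ρ) * D) ^ 2 ≤ (μ * (g * r)) ^ 2 :=
    pow_le_pow_left₀ (mul_nonneg (sub_pos.mpr hρμ).le hD) hlin 2
  have hquad : (μ - ρ) ^ 2 * D * D ≤ 2 * μ * g ^ 2 * D := by
    calc (μ - ρ) ^ 2 * D * D = ((μ - ρ) * D) ^ 2 := by ring
      _ ≤ (μ * (g * r)) ^ 2 := hsq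
      _ = μ * g ^ 2 * (μ * r ^ 2) := by ring
      _ ≤ μ * g ^ 2 * (2 * D) := by gcongr
      _ = 2 * μ * g ^ 2 * D := by ring
  rcases hD.eq_or_lt with hzero | hpos
  · rw [← hzero]
    positivity
  · rw [div_mul_eq_mul_div, le_div_iff₀ (pow_pos (sub_pos.mpr hρμ) 2)]
    nlinarith [le_of_mul_le_mul_right hquad hpos]

theorem local_pl_inequality_general {n : ℕ}
    (P : Set (EuclideanSpace ℝ (Fin n)))
    (f : EuclideanSpace ℝ (Fin n) → ℝ)
    (f' : EuclideanSpace ℝ (Fin n) → EuclideanSpace ℝ (Fin n))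
    (ρ μ ζ : ℝ) (hρ : 0 ≤ ρ) (hρμ : ρ < μ)
    (hweak : ∀ x ∈ P, ∀ y ∈ P, f y - f x ≥ ⟪f' x, y - x⟫ - (ρ / 2) * ‖y - x‖ ^ 2)
    (xstar : EuclideanSpace ℝ (Fin n)) (hxstar : xstar ∈ P)
    (hqg : ∀ x ∈ P, f x ≤ f xstar + ζ →
      ‖x - xstar‖ ^ 2 ≤ (2 / μ) * (f x - f xstar)) :
    ∀ x ∈ P, f x ≤ f xstar + ζ →
      f x - f xstar ≤ (2 * μ / (μ - ρ) ^ 2) * ‖f' x‖ ^ 2 := fun x hx hle =>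
  le_mul_sq_of_weakly_convex_of_quadratic_growth hρ hρμ
    (sub_le_norm_mul_norm_add_of_weakly_convex (hweak x hx xstar hxstar)) (hqg x hx hle)

/-- local Polyak–Łojasiewicz inequality from weak convexity and
local quadratic growth. -/
theorem local_pl_inequality {n : ℕ}
    (P : Set (EuclideanSpace ℝ (Fin n)))
    (hP : IsCompact P) (hPconv : Convex ℝ P) (hPne : P.Nonempty)
    (f : EuclideanSpace ℝ (Fin n) → ℝ)
    (f' : EuclideanSpace ℝ (Fin n) → EuclideanSpace ℝ (Fin n))
    (hf' : ∀ x ∈ P, HasGradientAt f (f' x) x)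
    (ρ μ ζ : ℝ) (hρ : 0 ≤ ρ) (hρμ : ρ < μ) (hζ : 0 < ζ)
    (hweak : ∀ x ∈ P, ∀ y ∈ P, f y - f x ≥ ⟪f' x, y - x⟫ - (ρ / 2) * ‖y - x‖ ^ 2)
    (xstar : EuclideanSpace ℝ (Fin n)) (hxstar : xstar ∈ P)
    (hmin : IsMinOn f P xstar)
    (huniq : ∀ y ∈ P, IsMinOn f P y → y = xstar)
    (hqg : ∀ x ∈ P, f x ≤ f xstar + ζ →
      ‖x - xstar‖ ^ 2 ≤ (2 / μ) * (f x - f xstar)) :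
    ∀ x ∈ P, f x ≤ f xstar + ζ →
      f x - f xstar ≤ (2 * μ / (μ - ρ) ^ 2) * ‖f' x‖ ^ 2 :=
  local_pl_inequality_general P f f' ρ μ ζ hρ hρμ hweak xstar hxstar hqg
end

section
/- Let P ⊂ ℝⁿ be a nonempty compact convex set and f a C¹ convex function on P. Suppose a minimizer x* of f over P satisfies B(x*, r) ⊂ P for some r > 0. Then for all x ∈ P, with v ∈ argmax_{u ∈ P}⟨∇f(x), x − u⟩, it holds that ⟨∇f(x), x − v⟩ ≥ r‖∇f(x)‖ ≥ r⟨∇f(x), x − x*⟩/‖x − x*‖ (the latter when x ≠ x*). -/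
open Set Metric
open scoped RealInnerProductSpace

/-!
By the first-order characterisation of convexity, `g = ∇f(x)` satisfies
`⟪g, x - x*⟫ ≥ f x - f x* ≥ 0`. The point `u = x* - (r / ‖g‖) • g` lies in `B(x*, r) ⊆ P` and
`⟪g, x - u⟫ = ⟪g, x - x*⟫ + r‖g‖ ≥ r‖g‖`, so the maximality of `v` gives the first inequality;
the second is Cauchy–Schwarz.
-/

theorem ConvexOn.apply_sub_le_of_hasFDerivAt {E : Type*} [NormedAddCommGroup E] [NormedSpace ℝ E]
    {s : Set E} {f : E → ℝ} {f' : E →L[ℝ] ℝ} {x y : E} (hf : ConvexOn ℝ s f)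
    (hx : x ∈ s) (hy : y ∈ s) (hfx : HasFDerivAt f f' x) :
    f' (y - x) ≤ f y - f x := by
  let c := AffineMap.lineMap (k := ℝ) x y
  have hconv : ConvexOn ℝ (Icc 0 1) (f ∘ c) :=
    (hf.comp_affineMap c).subset (hf.1.mapsTo_lineMap hx hy) (convex_Icc 0 1)
  have hderiv : HasDerivAt (f ∘ c) (f' (y - x)) 0 := by
    have hc0 : c 0 = x := AffineMap.lineMap_apply_zero x y
    exact (hc0 ▸ hfx).comp_hasDerivAt 0 AffineMap.hasDerivAt_lineMap
  simpa [slope, c] using hconv.le_slope_of_hasDerivAt (by simp) (by simp) one_pos hderiv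

section InnerProductSpace

variable {F : Type*} [NormedAddCommGroup F] [InnerProductSpace ℝ F]

theorem ConvexOn.inner_sub_le_of_hasGradientAt [CompleteSpace F] {s : Set F} {f : F → ℝ}
    {g x y : F} (hf : ConvexOn ℝ s f) (hx : x ∈ s) (hy : y ∈ s) (hfx : HasGradientAt f g x) :
    ⟪g, y - x⟫ ≤ f y - f x :=
  hf.apply_sub_le_of_hasFDerivAt hx hy hfx.hasFDerivAt

theorem ConvexOn.inner_sub_nonneg_of_isMinOn [CompleteSpace F] {s : Set F} {f : F → ℝ}
    {g x y : F} (hf : ConvexOn ℝ s f) (hx : x ∈ s) (hy : y ∈ s) (hfx : HasGradientAt f g x)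
    (hmin : IsMinOn f s y) :
    0 ≤ ⟪g, x - y⟫ := by
  have hgrad := hf.inner_sub_le_of_hasGradientAt hx hy hfx
  rw [← neg_sub, inner_neg_right] at hgrad
  linarith [isMinOn_iff.mp hmin x hx]

theorem exists_mem_closedBall_inner_sub_eq (g c : F) {r : ℝ} (hr : 0 ≤ r) :
    ∃ u ∈ closedBall c r, ⟪g, c - u⟫ = r * ‖g‖ := by
  rcases eq_or_ne g 0 with rfl | hg
  · exact ⟨c, mem_closedBall_self hr, by simp⟩
  refine ⟨c - (r * ‖g‖⁻¹) • g, ?_, ?_⟩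
  · rw [mem_closedBall, dist_eq_norm, sub_sub_cancel_left, norm_neg]
    exact (norm_smul_inv_norm' hr hg).le
  · have : ‖g‖ ≠ 0 := norm_ne_zero_iff.mpr hg
    rw [sub_sub_cancel, real_inner_smul_right, real_inner_self_eq_norm_sq]
    field_simp

theorem mul_norm_le_inner_sub_of_closedBall_subset {P : Set F} {g x c v : F} {r : ℝ}
    (hr : 0 ≤ r) (hball : closedBall c r ⊆ P) (hv : ∀ u ∈ P, ⟪g, x - u⟫ ≤ ⟪g, x - v⟫)
    (hc : 0 ≤ ⟪g, x - c⟫) :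
    r * ‖g‖ ≤ ⟪g, x - v⟫ := by
  obtain ⟨u, hu, hgu⟩ := exists_mem_closedBall_inner_sub_eq g c hr
  calc r * ‖g‖ ≤ ⟪g, x - c⟫ + ⟪g, c - u⟫ := by linarith
    _ = ⟪g, x - u⟫ := by rw [← inner_add_right, sub_add_sub_cancel]
    _ ≤ ⟪g, x - v⟫ := hv u (hball hu)

theorem real_inner_div_norm_le_norm (g y : F) : ⟪g, y⟫ / ‖y‖ ≤ ‖g‖ :=
  div_le_of_le_mul₀ (norm_nonneg _) (norm_nonneg _) (real_inner_le_norm g y)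

end InnerProductSpace

theorem scaling_inequality_interior_general {n : ℕ}
    (P : Set (EuclideanSpace ℝ (Fin n)))
    (f : EuclideanSpace ℝ (Fin n) → ℝ)
    (f' : EuclideanSpace ℝ (Fin n) → EuclideanSpace ℝ (Fin n))
    (hf : ConvexOn ℝ P f)
    (hf' : ∀ x ∈ P, HasGradientAt f (f' x) x)
    (xstar : EuclideanSpace ℝ (Fin n)) (hxstar : xstar ∈ P)
    (hmin : IsMinOn f P xstar)
    (r : ℝ) (hr : 0 < r) (hball : closedBall xstar r ⊆ P) :
    ∀ x ∈ P, ∀ v ∈ P, (∀ u ∈ P, ⟪f' x, x - u⟫ ≤ ⟪f' x, x - v⟫) →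
      r * ‖f' x‖ ≤ ⟪f' x, x - v⟫ ∧
        (x ≠ xstar → r * ⟪f' x, x - xstar⟫ / ‖x - xstar‖ ≤ r * ‖f' x‖) := by
  intro x hx v _ hvmax
  have hdescent : 0 ≤ ⟪f' x, x - xstar⟫ :=
    hf.inner_sub_nonneg_of_isMinOn hx hxstar (hf' x hx) hmin
  refine ⟨mul_norm_le_inner_sub_of_closedBall_subset hr.le hball hvmax hdescent, fun _ => ?_⟩
  rw [mul_div_assoc]
  exact mul_le_mul_of_nonneg_left (real_inner_div_norm_le_norm _ _) hr.le

/-- scaling inequality from convexity when the minimizer is in the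
interior of `P`. -/
theorem scaling_inequality_interior {n : ℕ}
    (P : Set (EuclideanSpace ℝ (Fin n)))
    (hP : IsCompact P) (hPconv : Convex ℝ P) (hPne : P.Nonempty)
    (f : EuclideanSpace ℝ (Fin n) → ℝ)
    (f' : EuclideanSpace ℝ (Fin n) → EuclideanSpace ℝ (Fin n))
    (hf : ConvexOn ℝ P f)
    (hf' : ∀ x ∈ P, HasGradientAt f (f' x) x)
    (xstar : EuclideanSpace ℝ (Fin n)) (hxstar : xstar ∈ P)
    (hmin : IsMinOn f P xstar)
    (r : ℝ) (hr : 0 < r) (hball : closedBall xstar r ⊆ P) :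
    ∀ x ∈ P, ∀ v ∈ P, (∀ u ∈ P, ⟪f' x, x - u⟫ ≤ ⟪f' x, x - v⟫) →
      r * ‖f' x‖ ≤ ⟪f' x, x - v⟫ ∧
        (x ≠ xstar → r * ⟪f' x, x - xstar⟫ / ‖x - xstar‖ ≤ r * ‖f' x‖) :=
  scaling_inequality_interior_general P f f' hf hf' xstar hxstar hmin r hr hball
end

section
/- Let P ⊂ ℝⁿ be a nonempty compact convex set and f a C¹, ρ-weakly convex function on P satisfying local μ-quadratic growth with level ζ > 0 at the minimizer x*, with ρ ≤ μ. If B(x*, r) ⊂ P for some r > 0, then for all x ∈ [f ≤ f* + ζ] ∩ P and v ∈ argmax_{u ∈ P}⟨∇f(x), x − u⟩, ⟨∇f(x), x − v⟩ ≥ r‖∇f(x)‖. -/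
open Set Metric
open scoped RealInnerProductSpace

/-!
Weak convexity bounds `⟪∇f(x), x - x*⟫` below by `f x - f* - (ρ/2)‖x - x*‖²`, and quadratic growth
makes this at least `((μ - ρ)/2)‖x - x*‖² ≥ 0`. Moving from `x*` by `r` against the gradient stays
in `P` and gains exactly `r‖∇f(x)‖`, which the maximizer `v` can only improve on.
-/

section InnerProductSpace

variable {E : Type*} [NormedAddCommGroup E] [InnerProductSpace ℝ E]

theorem inner_sub_nonneg_of_weak_convex_of_quadratic_growth {f : E → ℝ} {g x y : E} {ρ μ : ℝ}
    (hρμ : ρ ≤ μ) (hμ : 0 < μ)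
    (hweak : f y - f x ≥ ⟪g, y - x⟫ - (ρ / 2) * ‖y - x‖ ^ 2)
    (hqg : ‖x - y‖ ^ 2 ≤ (2 / μ) * (f x - f y)) :
    0 ≤ ⟪g, x - y⟫ := by
  have hgrowth : μ * ‖x - y‖ ^ 2 ≤ 2 * (f x - f y) := by
    calc μ * ‖x - y‖ ^ 2 ≤ μ * ((2 / μ) * (f x - f y)) := by gcongr
      _ = 2 * (f x - f y) := by field_simp
  have hneg : ⟪g, y - x⟫ = -⟪g, x - y⟫ := by rw [← inner_neg_right, neg_sub]
  rw [norm_sub_rev, hneg] at hweak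
  nlinarith [sq_nonneg ‖x - y‖]

theorem exists_mem_closedBall_inner_sub_eq_mul_norm (g c : E) {r : ℝ} (hr : 0 ≤ r) :
    ∃ u ∈ closedBall c r, ⟪g, c - u⟫ = r * ‖g‖ := by
  refine ⟨c - (r * ‖g‖⁻¹) • g, ?_, ?_⟩
  · rw [mem_closedBall, dist_eq_norm, sub_sub_cancel_left, norm_neg, norm_smul,
      Real.norm_of_nonneg (by positivity), mul_assoc]
    exact mul_le_of_le_one_right hr (inv_mul_le_one_of_le₀ le_rfl (norm_nonneg g))
  · rw [sub_sub_cancel, real_inner_smul_right, real_inner_self_eq_norm_sq]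
    rcases eq_or_ne ‖g‖ 0 with hg | hg
    · simp [hg]
    · field_simp

end InnerProductSpace

theorem scaling_inequality_weakly_convex_general {n : ℕ}
    (P : Set (EuclideanSpace ℝ (Fin n)))
    (f : EuclideanSpace ℝ (Fin n) → ℝ)
    (f' : EuclideanSpace ℝ (Fin n) → EuclideanSpace ℝ (Fin n))
    (ρ μ ζ : ℝ) (hρμ : ρ ≤ μ) (hμ : 0 < μ)
    (hweak : ∀ x ∈ P, ∀ y ∈ P, f y - f x ≥ ⟪f' x, y - x⟫ - (ρ / 2) * ‖y - x‖ ^ 2)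
    (xstar : EuclideanSpace ℝ (Fin n)) (hxstar : xstar ∈ P)
    (hqg : ∀ x ∈ P, f x ≤ f xstar + ζ →
      ‖x - xstar‖ ^ 2 ≤ (2 / μ) * (f x - f xstar))
    (r : ℝ) (hr : 0 < r) (hball : closedBall xstar r ⊆ P) :
    ∀ x ∈ P, f x ≤ f xstar + ζ →
      ∀ v ∈ P, (∀ u ∈ P, ⟪f' x, x - u⟫ ≤ ⟪f' x, x - v⟫) →
        r * ‖f' x‖ ≤ ⟪f' x, x - v⟫ := by
  intro x hx hlev v _ hmax
  obtain ⟨u, hu, hgain⟩ := exists_mem_closedBall_inner_sub_eq_mul_norm (f' x) xstar hr.le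
  have hdescent : 0 ≤ ⟪f' x, x - xstar⟫ :=
    inner_sub_nonneg_of_weak_convex_of_quadratic_growth hρμ hμ
      (hweak x hx xstar hxstar) (hqg x hx hlev)
  calc r * ‖f' x‖ ≤ ⟪f' x, x - xstar⟫ + ⟪f' x, xstar - u⟫ := by linarith
    _ = ⟪f' x, x - u⟫ := by rw [← inner_add_right, sub_add_sub_cancel]
    _ ≤ ⟪f' x, x - v⟫ := hmax u (hball hu)

/-- scaling inequality from weak convexity and local quadratic growth
when the minimizer is in the interior of `P`. -/
theorem scaling_inequality_weakly_convex {n : ℕ}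
    (P : Set (EuclideanSpace ℝ (Fin n)))
    (hP : IsCompact P) (hPconv : Convex ℝ P) (hPne : P.Nonempty)
    (f : EuclideanSpace ℝ (Fin n) → ℝ)
    (f' : EuclideanSpace ℝ (Fin n) → EuclideanSpace ℝ (Fin n))
    (hf' : ∀ x ∈ P, HasGradientAt f (f' x) x)
    (ρ μ ζ : ℝ) (hρ : 0 ≤ ρ) (hρμ : ρ ≤ μ) (hμ : 0 < μ) (hζ : 0 < ζ)
    (hweak : ∀ x ∈ P, ∀ y ∈ P, f y - f x ≥ ⟪f' x, y - x⟫ - (ρ / 2) * ‖y - x‖ ^ 2)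
    (xstar : EuclideanSpace ℝ (Fin n)) (hxstar : xstar ∈ P)
    (hmin : IsMinOn f P xstar)
    (hqg : ∀ x ∈ P, f x ≤ f xstar + ζ →
      ‖x - xstar‖ ^ 2 ≤ (2 / μ) * (f x - f xstar))
    (r : ℝ) (hr : 0 < r) (hball : closedBall xstar r ⊆ P) :
    ∀ x ∈ P, f x ≤ f xstar + ζ →
      ∀ v ∈ P, (∀ u ∈ P, ⟪f' x, x - u⟫ ≤ ⟪f' x, x - v⟫) →
        r * ‖f' x‖ ≤ ⟪f' x, x - v⟫ :=
  scaling_inequality_weakly_convex_general P f f' ρ μ ζ hρμ hμ hweak xstar hxstar hqg r hr hball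
end

section
/- Let (f, φ) be L-smad on a compact convex set P with strictly convex φ satisfying D_φ((1−γ)x+γv, x) ≤ γ^{1+ν}D_φ(v,x) for some ν ∈ (0,1], and let f be convex. Let D² := sup_{x,y∈P} D_φ(x,y). Consider Frank–Wolfe iterates x_{t+1} = (1−γ_t)x_t + γ_t v_t with v_t ∈ argmin_{v∈P}⟨∇f(x_t), v⟩ and γ_t = 2/(2+t). Then for all t ≥ 1, f(x_t) − f* ≤ 2^{1+ν} L D² / (t+2)^ν, where f* = min_{x∈P} f(x). -/
open Set
open scoped RealInnerProductSpace

/-! The primal gap `h t = f (x t) - f xstar` obeys `h (t+1) ≤ (1 - γ t) h t + L D² γ t ^ (1+ν)`: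
the smad upper bound and the scaling of `D_φ` along the step control the curvature term, while
convexity of `f` and the linear minimality of `v t` control the linear term. For `γ t = 2/(t+2)`
this recursion propagates `h (t+1) ≤ 2^(1+ν) L D² (t+1)/(t+2)^(1+ν)`, which is at most
`2^(1+ν) L D²/(t+3)^ν` since `(s-1)(s+1)^ν ≤ s^(1+ν)` for `s ≥ 1`, `ν ≤ 1`.
`D²` is finite: the scaling at `γ = 1/2` bounds `(1 - 2^(-ν)) D_φ(p,q)` by
`φ p + φ q - 2 φ((p+q)/2)`, and `φ` is continuous on the compact set `P`. -/

theorem ConvexOn.inner_gradient_le_sub {E : Type*} [NormedAddCommGroup E]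
    [InnerProductSpace ℝ E] [CompleteSpace E] {s : Set E} {f : E → ℝ} {a b g : E}
    (hf : ConvexOn ℝ s f) (ha : a ∈ s) (hb : b ∈ s) (hg : HasGradientAt f g a) :
    ⟪g, b - a⟫ ≤ f b - f a := by
  let ℓ : ℝ →ᵃ[ℝ] E := AffineMap.lineMap a b
  have hline : HasDerivAt (f ∘ ℓ) ⟪g, b - a⟫ 0 := by
    rw [← AffineMap.lineMap_apply_zero a b (k := ℝ)] at hg
    simpa using hg.hasFDerivAt.comp_hasDerivAt (0 : ℝ) AffineMap.hasDerivAt_lineMap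
  simpa [ℓ, slope] using (hf.comp_affineMap ℓ).le_slope_of_hasDerivAt
    (by simpa [ℓ]) (by simpa [ℓ]) zero_lt_one hline

theorem Convex.iterate_mem {E : Type*} [AddCommGroup E] [Module ℝ E] {P : Set E}
    (hP : Convex ℝ P) {x v : ℕ → E} {γ : ℕ → ℝ} (hγ : ∀ t, γ t ∈ Icc (0:ℝ) 1)
    (hx0 : x 0 ∈ P) (hv : ∀ t, v t ∈ P) (hstep : ∀ t, x (t + 1) = (1 - γ t) • x t + γ t • v t)
    (t : ℕ) : x t ∈ P := by
  induction t with
  | zero => exact hx0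
  | succ k ih =>
    rw [hstep k]
    exact hP ih (hv k) (by linarith [(hγ k).2]) (hγ k).1 (by ring)

theorem two_div_two_add_natCast_mem_Icc (t : ℕ) : 2 / (2 + (t : ℝ)) ∈ Icc (0:ℝ) 1 :=
  ⟨by positivity, (div_le_one (by positivity)).2 (by linarith [t.cast_nonneg (α := ℝ)])⟩

theorem sub_one_div_rpow_one_add_le_one_div_rpow {s ν : ℝ} (hs : 1 ≤ s) (hν : ν ≤ 1) :
    (s - 1) / s ^ (1 + ν) ≤ 1 / (s + 1) ^ ν := by
  have hs0 : 0 < s := by linarith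
  have hsν : 0 < s ^ ν := by positivity
  have hsucc : (s + 1) ^ ν ≤ (s + 1) / s * s ^ ν := by
    have := Real.rpow_le_rpow_of_exponent_le ((one_le_div hs0).2 (by linarith : s ≤ s + 1)) hν
    rwa [Real.rpow_one, Real.div_rpow (by linarith) hs0.le, div_le_iff₀ hsν] at this
  rw [Real.rpow_add hs0, Real.rpow_one, div_le_div_iff₀ (by positivity) (by positivity)]
  calc (s - 1) * (s + 1) ^ ν ≤ (s - 1) * ((s + 1) / s * s ^ ν) := by gcongr
    _ = (s - 1 / s) * s ^ ν := by field_simp; ring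
    _ ≤ 1 * (s * s ^ ν) := by
      rw [one_mul]; gcongr; linarith [one_div_pos.2 hs0]

theorem le_of_open_loop_recursion {h : ℕ → ℝ} {C ν : ℝ} (hC : 0 ≤ C) (hν : ν ≤ 1)
    (hrec : ∀ t : ℕ, h (t + 1) ≤
      (1 - 2 / (2 + (t : ℝ))) * h t + C * (2 / (2 + (t : ℝ))) ^ (1 + ν))
    (t : ℕ) (ht : 1 ≤ t) :
    h t ≤ 2 ^ (1 + ν) * C / ((t : ℝ) + 2) ^ ν := by
  set A := 2 ^ (1 + ν) * C
  have hA : 0 ≤ A := by positivity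
  have hrec' : ∀ t : ℕ, h (t + 1) ≤
      (t : ℝ) / (t + 2) * h t + A / ((t : ℝ) + 2) ^ (1 + ν) := fun t => by
    have ht2 : (0 : ℝ) < t + 2 := by positivity
    convert hrec t using 2
    · field_simp; ring
    · rw [add_comm 2 (t : ℝ), Real.div_rpow zero_le_two ht2.le]; ring
  have hshift : ∀ t : ℕ, A * (t + 1) / ((t : ℝ) + 2) ^ (1 + ν) ≤ A / ((t : ℝ) + 3) ^ ν := by
    intro t
    have := sub_one_div_rpow_one_add_le_one_div_rpow (s := (t : ℝ) + 2)
      (by linarith [t.cast_nonneg (α := ℝ)]) hν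
    rw [show (t : ℝ) + 3 = t + 2 + 1 by ring, show (t : ℝ) + 1 = t + 2 - 1 by ring,
      mul_div_assoc, div_eq_mul_one_div A]
    exact mul_le_mul_of_nonneg_left this hA
  have hdecay : ∀ t : ℕ, h (t + 1) ≤ A * (t + 1) / ((t : ℝ) + 2) ^ (1 + ν) := by
    intro t
    induction t with
    -- `γ 0 = 1`, so the first step forgets `h 0` entirely
    | zero => simpa using hrec' 0
    | succ k ih =>
      have hs : (0 : ℝ) < k + 3 := by positivity
      calc h (k + 1 + 1) ≤ (k + 1) / (k + 3) * h (k + 1) + A / ((k : ℝ) + 3) ^ (1 + ν) := by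
            convert hrec' (k + 1) using 3 <;> push_cast <;> ring_nf
        _ ≤ (k + 1) / (k + 3) * (A / ((k : ℝ) + 3) ^ ν) + A / ((k : ℝ) + 3) ^ (1 + ν) := by
            gcongr; exact ih.trans (hshift k)
        _ = A * ((k + 1 : ℕ) + 1) / (((k + 1 : ℕ) : ℝ) + 2) ^ (1 + ν) := by
            push_cast
            rw [show (k : ℝ) + 1 + 2 = k + 3 by ring, Real.rpow_add hs, Real.rpow_one]
            field_simp
  obtain ⟨k, rfl⟩ := Nat.exists_eq_add_of_le' ht
  calc h (k + 1) ≤ A * (k + 1) / ((k : ℝ) + 2) ^ (1 + ν) := hdecay k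
    _ ≤ A / ((k : ℝ) + 3) ^ ν := hshift k
    _ = A / (((k + 1 : ℕ) : ℝ) + 2) ^ ν := by push_cast; ring_nf

def SmadOn {n : ℕ} (P : Set (EuclideanSpace ℝ (Fin n))) (f : EuclideanSpace ℝ (Fin n) → ℝ)
    (f' : EuclideanSpace ℝ (Fin n) → EuclideanSpace ℝ (Fin n)) (φ : EuclideanSpace ℝ (Fin n) → ℝ)
    (φ' : EuclideanSpace ℝ (Fin n) → EuclideanSpace ℝ (Fin n)) (L : ℝ) : Prop :=
  ∀ a ∈ P, ∀ b ∈ P, |f a - f b - ⟪f' b, a - b⟫| ≤ L * bregman φ φ' a b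

def BregmanScalingOn {n : ℕ} (P : Set (EuclideanSpace ℝ (Fin n)))
    (φ : EuclideanSpace ℝ (Fin n) → ℝ)
    (φ' : EuclideanSpace ℝ (Fin n) → EuclideanSpace ℝ (Fin n)) (ν : ℝ) : Prop :=
  ∀ a ∈ P, ∀ b ∈ P, ∀ γ ∈ Icc (0:ℝ) 1,
    bregman φ φ' ((1 - γ) • a + γ • b) a ≤ γ ^ (1 + ν) * bregman φ φ' b a

section Bregman

variable {n : ℕ} {P : Set (EuclideanSpace ℝ (Fin n))}
  {φ f : EuclideanSpace ℝ (Fin n) → ℝ} {φ' f' : EuclideanSpace ℝ (Fin n) → EuclideanSpace ℝ (Fin n)}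

@[simp]
theorem bregman_self (x : EuclideanSpace ℝ (Fin n)) : bregman φ φ' x x = 0 := by
  simp [bregman]

theorem one_sub_half_rpow_mul_bregman_le {ν : ℝ} {p q : EuclideanSpace ℝ (Fin n)}
    (h : bregman φ φ' ((1 - 2⁻¹ : ℝ) • q + (2⁻¹ : ℝ) • p) q ≤
      (2⁻¹ : ℝ) ^ (1 + ν) * bregman φ φ' p q) :
    (1 - (2⁻¹ : ℝ) ^ ν) * bregman φ φ' p q ≤
      φ p + φ q - 2 * φ ((1 - 2⁻¹ : ℝ) • q + (2⁻¹ : ℝ) • p) := by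
  have hmid : (1 - 2⁻¹ : ℝ) • q + (2⁻¹ : ℝ) • p - q = (2⁻¹ : ℝ) • (p - q) := by module
  rw [Real.rpow_add (by norm_num), Real.rpow_one] at h
  unfold bregman at h ⊢
  rw [hmid, real_inner_smul_right] at h
  linear_combination 2 * h

theorem bddAbove_bregman (hP : IsCompact P) (hPconv : Convex ℝ P)
    (hφ' : ∀ x ∈ P, HasGradientAt φ (φ' x) x) {ν : ℝ} (hν : 0 < ν)
    (hscale : BregmanScalingOn P φ φ' ν) :
    BddAbove {d : ℝ | ∃ a ∈ P, ∃ b ∈ P, d = bregman φ φ' a b} := by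
  have hφcont : ContinuousOn φ P := fun p hp =>
    (hφ' p hp).hasFDerivAt.continuousAt.continuousWithinAt
  obtain ⟨C, hC⟩ := hP.exists_bound_of_continuousOn hφcont
  have hc : 0 < 1 - (2⁻¹ : ℝ) ^ ν := sub_pos.2 (Real.rpow_lt_one (by norm_num) (by norm_num) hν)
  refine ⟨4 * C / (1 - (2⁻¹ : ℝ) ^ ν), ?_⟩
  rintro _ ⟨p, hp, q, hq, rfl⟩
  have hm : (1 - 2⁻¹ : ℝ) • q + (2⁻¹ : ℝ) • p ∈ P :=
    hPconv hq hp (by norm_num) (by norm_num) (by norm_num)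
  have key := one_sub_half_rpow_mul_bregman_le
    (hscale q hq p hp 2⁻¹ ⟨by norm_num, by norm_num⟩)
  have hbound : ∀ y ∈ P, |φ y| ≤ C := hC
  rw [le_div_iff₀ hc, mul_comm]
  linarith [abs_le.1 (hbound p hp), abs_le.1 (hbound q hq), abs_le.1 (hbound _ hm)]

theorem frankWolfe_descent (hf' : ∀ x ∈ P, HasGradientAt f (f' x) x) (hf : ConvexOn ℝ P f)
    {L ν : ℝ} (hL : 0 ≤ L) (hsmad : SmadOn P f f' φ φ' L) (hscale : BregmanScalingOn P φ φ' ν)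
    {x v z : EuclideanSpace ℝ (Fin n)} (hx : x ∈ P) (hv : v ∈ P) (hz : z ∈ P)
    (hvmin : ⟪f' x, v⟫ ≤ ⟪f' x, z⟫) {γ : ℝ} (hγ : γ ∈ Icc (0:ℝ) 1) :
    f ((1 - γ) • x + γ • v) - f z ≤
      (1 - γ) * (f x - f z) + L * γ ^ (1 + ν) * bregman φ φ' v x := by
  set x' := (1 - γ) • x + γ • v
  have hx' : x' ∈ P := hf.1 hx hv (by linarith [hγ.2]) hγ.1 (by ring)
  have hsmooth : f x' - f x - γ * ⟪f' x, v - x⟫ ≤ L * (γ ^ (1 + ν) * bregman φ φ' v x) :=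
    calc f x' - f x - γ * ⟪f' x, v - x⟫ = f x' - f x - ⟪f' x, x' - x⟫ := by
          rw [show x' - x = γ • (v - x) by module, real_inner_smul_right]
      _ ≤ L * bregman φ φ' x' x := le_of_abs_le (hsmad x' hx' x hx)
      _ ≤ L * (γ ^ (1 + ν) * bregman φ φ' v x) := by gcongr; exact hscale x hx v hv γ hγ
  have hgap : ⟪f' x, v - x⟫ ≤ f z - f x := by
    have := hf.inner_gradient_le_sub hx hz (hf' x hx)
    rw [inner_sub_right] at this ⊢
    linarith
  linarith [mul_le_mul_of_nonneg_left hgap hγ.1]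

end Bregman

theorem fw_open_loop_sublinear_convex_general {n : ℕ}
    (P : Set (EuclideanSpace ℝ (Fin n)))
    (hP : IsCompact P) (hPconv : Convex ℝ P)
    (φ f : EuclideanSpace ℝ (Fin n) → ℝ)
    (φ' f' : EuclideanSpace ℝ (Fin n) → EuclideanSpace ℝ (Fin n))
    (hφ' : ∀ x ∈ P, HasGradientAt φ (φ' x) x)
    (hf' : ∀ x ∈ P, HasGradientAt f (f' x) x)
    (hf : ConvexOn ℝ P f)
    (L ν : ℝ) (hL : 0 < L) (hν : ν ∈ Ioc (0:ℝ) 1)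
    (hsmad : ∀ a ∈ P, ∀ b ∈ P,
      |f a - f b - ⟪f' b, a - b⟫| ≤ L * bregman φ φ' a b)
    (hscale : ∀ a ∈ P, ∀ b ∈ P, ∀ γ ∈ Icc (0:ℝ) 1,
      bregman φ φ' ((1 - γ) • a + γ • b) a ≤ γ ^ (1 + ν) * bregman φ φ' b a)
    (xstar : EuclideanSpace ℝ (Fin n)) (hxstar : xstar ∈ P)
    (x v : ℕ → EuclideanSpace ℝ (Fin n))
    (hx0 : x 0 ∈ P)
    (hv : ∀ t : ℕ, v t ∈ P ∧ ∀ u ∈ P, ⟪f' (x t), v t⟫ ≤ ⟪f' (x t), u⟫)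
    (hstep : ∀ t : ℕ,
      x (t + 1) = (1 - 2 / (2 + (t : ℝ))) • x t + (2 / (2 + (t : ℝ))) • v t) :
    ∀ t : ℕ, 1 ≤ t →
      f (x t) - f xstar ≤
        2 ^ (1 + ν) * L * sSup {d : ℝ | ∃ a ∈ P, ∃ b ∈ P, d = bregman φ φ' a b} /
          ((t : ℝ) + 2) ^ ν := by
  have hbdd := bddAbove_bregman hP hPconv hφ' hν.1 hscale
  set D := sSup {d : ℝ | ∃ a ∈ P, ∃ b ∈ P, d = bregman φ φ' a b}
  have hD : ∀ a ∈ P, ∀ b ∈ P, bregman φ φ' a b ≤ D := fun a ha b hb =>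
    le_csSup hbdd ⟨a, ha, b, hb, rfl⟩
  have hD0 : 0 ≤ D := by simpa using hD xstar hxstar xstar hxstar
  have hxP : ∀ t, x t ∈ P := hPconv.iterate_mem two_div_two_add_natCast_mem_Icc hx0
    (fun t => (hv t).1) hstep
  intro t ht
  rw [mul_assoc]
  refine le_of_open_loop_recursion (h := fun t => f (x t) - f xstar)
    (mul_nonneg hL.le hD0) hν.2 (fun t => ?_) t ht
  have hγ := two_div_two_add_natCast_mem_Icc t
  calc f (x (t + 1)) - f xstar
      ≤ (1 - 2 / (2 + (t : ℝ))) * (f (x t) - f xstar)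
        + L * (2 / (2 + (t : ℝ))) ^ (1 + ν) * bregman φ φ' (v t) (x t) := by
        rw [hstep t]
        exact frankWolfe_descent hf' hf hL.le hsmad hscale (hxP t) (hv t).1 hxstar
          ((hv t).2 xstar hxstar) hγ
    _ ≤ (1 - 2 / (2 + (t : ℝ))) * (f (x t) - f xstar)
        + L * D * (2 / (2 + (t : ℝ))) ^ (1 + ν) := by
        rw [mul_right_comm L]
        gcongr
        exact hD _ (hv t).1 _ (hxP t)

/-- sublinear primal convergence of the Frank–Wolfe algorithm with
open-loop step-size `γ_t = 2/(2+t)` for a convex `L`-smad pair `(f, φ)`: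
`f(x_t) - f* ≤ 2^(1+ν) L D² / (t+2)^ν` for all `t ≥ 1`,
where `D² = sup_{x,y ∈ P} D_φ(x,y)`. -/
theorem fw_open_loop_sublinear_convex {n : ℕ}
    (P : Set (EuclideanSpace ℝ (Fin n)))
    (hP : IsCompact P) (hPconv : Convex ℝ P) (hPne : P.Nonempty)
    (φ f : EuclideanSpace ℝ (Fin n) → ℝ)
    (φ' f' : EuclideanSpace ℝ (Fin n) → EuclideanSpace ℝ (Fin n))
    (hφ : StrictConvexOn ℝ P φ)
    (hφ' : ∀ x ∈ P, HasGradientAt φ (φ' x) x)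
    (hf' : ∀ x ∈ P, HasGradientAt f (f' x) x)
    (hf : ConvexOn ℝ P f)
    (L ν : ℝ) (hL : 0 < L) (hν : ν ∈ Ioc (0:ℝ) 1)
    (hsmad : ∀ a ∈ P, ∀ b ∈ P,
      |f a - f b - ⟪f' b, a - b⟫| ≤ L * bregman φ φ' a b)
    (hscale : ∀ a ∈ P, ∀ b ∈ P, ∀ γ ∈ Icc (0:ℝ) 1,
      bregman φ φ' ((1 - γ) • a + γ • b) a ≤ γ ^ (1 + ν) * bregman φ φ' b a)
    (xstar : EuclideanSpace ℝ (Fin n)) (hxstar : xstar ∈ P)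
    (hmin : IsMinOn f P xstar)
    (x v : ℕ → EuclideanSpace ℝ (Fin n))
    (hx0 : x 0 ∈ P)
    (hv : ∀ t : ℕ, v t ∈ P ∧ ∀ u ∈ P, ⟪f' (x t), v t⟫ ≤ ⟪f' (x t), u⟫)
    (hstep : ∀ t : ℕ,
      x (t + 1) = (1 - 2 / (2 + (t : ℝ))) • x t + (2 / (2 + (t : ℝ))) • v t) :
    ∀ t : ℕ, 1 ≤ t →
      f (x t) - f xstar ≤
        2 ^ (1 + ν) * L * sSup {d : ℝ | ∃ a ∈ P, ∃ b ∈ P, d = bregman φ φ' a b} /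
          ((t : ℝ) + 2) ^ ν :=
  fw_open_loop_sublinear_convex_general P hP hPconv φ f φ' f' hφ' hf' hf L ν hL hν hsmad hscale
    xstar hxstar x v hx0 hv hstep
end

section
/- Let P be a full-dimensional compact (α, p)-uniformly convex subset of ℝⁿ, u a nonzero vector, and v = argmin_{y∈P}⟨u, y⟩. Then for all x ∈ P with x ≠ v, ⟨u, x − v⟩ / ‖x − v‖^p ≥ α‖u‖. -/
/-!
Testing the uniform convexity condition at `x`, `v` with `z = -u/‖u‖` and using that `⟪u, ·⟫` is
minimal on `P` at `v` gives `γ (1 - γ) α ‖u‖ ‖x - v‖^p ≤ γ ⟪u, x - v⟫` for every `γ ∈ (0, 1]`;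
dividing by `γ` and letting `γ → 0` yields the scaling inequality.
-/

open Set Filter Topology
open scoped RealInnerProductSpace

theorem le_of_forall_one_sub_mul_le {b c : ℝ} (h : ∀ γ ∈ Ioc (0 : ℝ) 1, (1 - γ) * c ≤ b) :
    c ≤ b := by
  have hlim : Tendsto (fun γ : ℝ => (1 - γ) * c) (𝓝[>] 0) (𝓝 c) := by
    have hcont : Continuous fun γ : ℝ => (1 - γ) * c := by fun_prop
    simpa using (hcont.tendsto 0).mono_left nhdsWithin_le_nhds
  exact le_of_tendsto hlim (mem_of_superset (Ioc_mem_nhdsGT zero_lt_one) h)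

variable {E : Type*} [NormedAddCommGroup E] [InnerProductSpace ℝ E]

theorem exists_norm_le_one_inner_eq_neg_norm (u : E) : ∃ z : E, ‖z‖ ≤ 1 ∧ ⟪u, z⟫ = -‖u‖ := by
  refine ⟨-(‖u‖⁻¹ • u), ?_, ?_⟩
  · rw [norm_neg, norm_smul, norm_inv, norm_norm]
    exact inv_mul_le_one_of_le₀ le_rfl (norm_nonneg u)
  · rw [inner_neg_right, real_inner_smul_right, real_inner_self_eq_norm_mul_norm, ← mul_assoc,
      inv_mul_mul_self]

def IsUniformlyConvexSet (α p : ℝ) (P : Set E) : Prop :=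
  ∀ x ∈ P, ∀ y ∈ P, ∀ γ ∈ Icc (0 : ℝ) 1, ∀ z : E, ‖z‖ ≤ 1 →
    y + γ • (x - y) + (γ * (1 - γ) * α * ‖x - y‖ ^ p) • z ∈ P

namespace IsUniformlyConvexSet

variable {α p γ : ℝ} {P : Set E} {u v x : E}

theorem one_sub_mul_le_inner (hP : IsUniformlyConvexSet α p P) (hvP : v ∈ P)
    (hv : IsMinOn (⟪u, ·⟫) P v) (hxP : x ∈ P) (hγ : γ ∈ Ioc (0 : ℝ) 1) :
    (1 - γ) * (α * ‖u‖ * ‖x - v‖ ^ p) ≤ ⟪u, x - v⟫ := by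
  obtain ⟨z, hz, huz⟩ := exists_norm_le_one_inner_eq_neg_norm u
  have hmin := isMinOn_iff.mp hv _ (hP x hxP v hvP γ (Ioc_subset_Icc_self hγ) z hz)
  simp only [inner_add_right, real_inner_smul_right, huz] at hmin
  refine le_of_mul_le_mul_left ?_ hγ.1
  linarith

theorem mul_norm_rpow_le_inner (hP : IsUniformlyConvexSet α p P) (hvP : v ∈ P)
    (hv : IsMinOn (⟪u, ·⟫) P v) (hxP : x ∈ P) :
    α * ‖u‖ * ‖x - v‖ ^ p ≤ ⟪u, x - v⟫ :=
  le_of_forall_one_sub_mul_le fun _ hγ => hP.one_sub_mul_le_inner hvP hv hxP hγ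

end IsUniformlyConvexSet

theorem scaling_uniformly_convex_set_general {n : ℕ}
    (P : Set (EuclideanSpace ℝ (Fin n)))
    (α p : ℝ)
    (hunif : ∀ x ∈ P, ∀ y ∈ P, ∀ γ ∈ Icc (0:ℝ) 1,
      ∀ z : EuclideanSpace ℝ (Fin n), ‖z‖ ≤ 1 →
        y + γ • (x - y) + (γ * (1 - γ) * α * ‖x - y‖ ^ p) • z ∈ P)
    (u : EuclideanSpace ℝ (Fin n))
    (v : EuclideanSpace ℝ (Fin n)) (hvP : v ∈ P)
    (hv : ∀ y ∈ P, ⟪u, v⟫ ≤ ⟪u, y⟫) :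
    ∀ x ∈ P, x ≠ v → α * ‖u‖ ≤ ⟪u, x - v⟫ / ‖x - v‖ ^ p := by
  intro x hxP hxv
  have hdist : 0 < ‖x - v‖ ^ p := Real.rpow_pos_of_pos (norm_pos_iff.mpr (sub_ne_zero.mpr hxv)) p
  rw [le_div_iff₀ hdist]
  exact IsUniformlyConvexSet.mul_norm_rpow_le_inner hunif hvP (isMinOn_iff.mpr hv) hxP

/-- scaling inequality over (α, p)-uniformly convex sets:
for the linear minimizer `v` of a nonzero vector `u` over `P`,
`⟨u, x - v⟩/‖x - v‖^p ≥ α‖u‖` for all `x ∈ P`, `x ≠ v`. -/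
theorem scaling_uniformly_convex_set {n : ℕ}
    (P : Set (EuclideanSpace ℝ (Fin n)))
    (hP : IsCompact P) (hPne : P.Nonempty)
    (hfull : (interior P).Nonempty)
    (α p : ℝ) (hα : 0 < α) (hp : 0 < p)
    (hunif : ∀ x ∈ P, ∀ y ∈ P, ∀ γ ∈ Icc (0:ℝ) 1,
      ∀ z : EuclideanSpace ℝ (Fin n), ‖z‖ ≤ 1 →
        y + γ • (x - y) + (γ * (1 - γ) * α * ‖x - y‖ ^ p) • z ∈ P)
    (u : EuclideanSpace ℝ (Fin n)) (hu : u ≠ 0)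
    (v : EuclideanSpace ℝ (Fin n)) (hvP : v ∈ P)
    (hv : ∀ y ∈ P, ⟪u, v⟫ ≤ ⟪u, y⟫) :
    ∀ x ∈ P, x ≠ v → α * ‖u‖ ≤ ⟪u, x - v⟫ / ‖x - v‖ ^ p :=
  scaling_uniformly_convex_set_general P α p hunif u v hvP hv
end

section
/- Let P be a polytope with pyramidal width δ > 0, and let f be a C¹, ρ-weakly convex function satisfying local μ-quadratic growth with level ζ at a minimizer x* over P, with ρ/μ < 1. Let S be a set of vertices of P with x ∈ conv S, v^FW = argmin_{v∈P}⟨∇f(x), v⟩, and v^A = argmax_{v∈S}⟨∇f(x), v⟩. Then for all x ∈ [f ≤ f* + ζ] ∩ P: f(x) − f* ≤ (2μ/((μ−ρ)²δ²)) · ⟨∇f(x), v^A − v^FW⟩². -/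
open Set
open scoped RealInnerProductSpace

/-!
At a point `x` of the sublevel set with positive gap `h = f x - f x⋆`, weak convexity gives
`⟪∇f x, x - x⋆⟫ ≥ h - (ρ/2)‖x - x⋆‖²`, and quadratic growth turns this into
`μ ⟪∇f x, x - x⋆⟫ ≥ (μ - ρ) h > 0`. The pyramidal width applied with `y = x⋆` bounds the
away-step gap `⟪∇f x, v^A - v^FW⟫` from below by `δ ⟪∇f x, x - x⋆⟫ / ‖x - x⋆‖`; squaring and
using `‖x - x⋆‖² ≤ 2h/μ` once more leaves a bound linear in `h`.
-/

theorem sub_mul_sub_le_mul_inner_of_weakConvex_of_quadraticGrowth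
    {E : Type*} [NormedAddCommGroup E] [InnerProductSpace ℝ E]
    {f : E → ℝ} {g x xstar : E} {ρ μ : ℝ} (hρ : 0 ≤ ρ) (hμ : 0 < μ)
    (hweak : f xstar - f x ≥ ⟪g, xstar - x⟫ - (ρ / 2) * ‖xstar - x‖ ^ 2)
    (hqg : ‖x - xstar‖ ^ 2 ≤ (2 / μ) * (f x - f xstar)) :
    (μ - ρ) * (f x - f xstar) ≤ μ * ⟪g, x - xstar⟫ := by
  rw [← neg_sub x xstar, inner_neg_right, norm_neg] at hweak
  rw [div_mul_eq_mul_div, le_div_iff₀ hμ] at hqg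
  nlinarith

theorem le_mul_sq_of_inner_lower_bound {h c r g δ ρ μ : ℝ} (hh : 0 < h) (hr : 0 < r)
    (hδ : 0 < δ) (hμ : 0 < μ) (hρμ : ρ < μ)
    (hc : (μ - ρ) * h ≤ μ * c) (hqg : r ^ 2 ≤ (2 / μ) * h) (hg : δ * c / r ≤ g) :
    h ≤ 2 * μ / ((μ - ρ) ^ 2 * δ ^ 2) * g ^ 2 := by
  rw [div_le_iff₀ hr] at hg
  rw [div_mul_eq_mul_div, le_div_iff₀ hμ] at hqg
  have hlin : (μ - ρ) * δ * h ≤ μ * g * r := by nlinarith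
  have hsq : ((μ - ρ) * δ * h) ^ 2 ≤ (μ * g * r) ^ 2 :=
    pow_le_pow_left₀ (by have := sub_pos.mpr hρμ; positivity) hlin 2
  have hquad : ((μ - ρ) * δ) ^ 2 * h ^ 2 ≤ 2 * μ * g ^ 2 * h := by
    calc ((μ - ρ) * δ) ^ 2 * h ^ 2 = ((μ - ρ) * δ * h) ^ 2 := by ring
      _ ≤ (μ * g * r) ^ 2 := hsq
      _ = (μ * g ^ 2) * (r ^ 2 * μ) := by ring
      _ ≤ (μ * g ^ 2) * (2 * h) := by gcongr
      _ = 2 * μ * g ^ 2 * h := by ring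
  have hD : 0 < (μ - ρ) ^ 2 * δ ^ 2 := by have := sub_pos.mpr hρμ; positivity
  rw [div_mul_eq_mul_div, le_div_iff₀ hD]
  nlinarith

theorem primal_gap_pyramidal_weakly_convex_general {n : ℕ}
    (V : Finset (EuclideanSpace ℝ (Fin n)))
    (P : Set (EuclideanSpace ℝ (Fin n)))
    (δ : ℝ) (hδ : 0 < δ)
    -- `δ` is (a lower bound on) the pyramidal width of the polytope `P`:
    (hpw : ∀ ψ : EuclideanSpace ℝ (Fin n),
      ∀ S : Finset (EuclideanSpace ℝ (Fin n)), S ⊆ V →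
      ∀ x' ∈ convexHull ℝ (S : Set (EuclideanSpace ℝ (Fin n))), ∀ y ∈ P, x' ≠ y →
      ∀ vFW ∈ P, (∀ w ∈ P, ⟪ψ, vFW⟫ ≤ ⟪ψ, w⟫) →
      ∀ vA ∈ S, (∀ w ∈ S, ⟪ψ, w⟫ ≤ ⟪ψ, vA⟫) →
        δ * ⟪ψ, x' - y⟫ / ‖x' - y‖ ≤ ⟪ψ, vA - vFW⟫)
    (f : EuclideanSpace ℝ (Fin n) → ℝ)
    (f' : EuclideanSpace ℝ (Fin n) → EuclideanSpace ℝ (Fin n))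
    (ρ μ ζ : ℝ) (hρ : 0 ≤ ρ) (hμ : 0 < μ) (hρμ : ρ / μ < 1)
    (hweak : ∀ x ∈ P, ∀ y ∈ P, f y - f x ≥ ⟪f' x, y - x⟫ - (ρ / 2) * ‖y - x‖ ^ 2)
    (xstar : EuclideanSpace ℝ (Fin n)) (hxstar : xstar ∈ P)
    (hqg : ∀ x ∈ P, f x ≤ f xstar + ζ →
      ‖x - xstar‖ ^ 2 ≤ (2 / μ) * (f x - f xstar))
    (S : Finset (EuclideanSpace ℝ (Fin n))) (hS : S ⊆ V)
    (x : EuclideanSpace ℝ (Fin n))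
    (hxS : x ∈ convexHull ℝ (S : Set (EuclideanSpace ℝ (Fin n))))
    (vFW : EuclideanSpace ℝ (Fin n)) (hvFW : vFW ∈ P)
    (hvFWmin : ∀ w ∈ P, ⟪f' x, vFW⟫ ≤ ⟪f' x, w⟫)
    (vA : EuclideanSpace ℝ (Fin n)) (hvA : vA ∈ S)
    (hvAmax : ∀ w ∈ S, ⟪f' x, w⟫ ≤ ⟪f' x, vA⟫) :
    x ∈ P → f x ≤ f xstar + ζ →
      f x - f xstar ≤
        (2 * μ / ((μ - ρ) ^ 2 * δ ^ 2)) * ⟪f' x, vA - vFW⟫ ^ 2 := by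
  intro hxP hlev
  rcases le_or_gt (f x - f xstar) 0 with hgap | hgap
  · exact hgap.trans (by positivity)
  have hne : x ≠ xstar := by rintro rfl; simp at hgap
  exact le_mul_sq_of_inner_lower_bound hgap (norm_sub_pos_iff.mpr hne) hδ hμ
    ((div_lt_one hμ).mp hρμ)
    (sub_mul_sub_le_mul_inner_of_weakConvex_of_quadraticGrowth hρ hμ
      (hweak x hxP xstar hxstar) (hqg x hxP hlev))
    (hqg x hxP hlev)
    (hpw (f' x) S hS x hxS xstar hxstar hne vFW hvFW hvFWmin vA hvA hvAmax)

/-- upper bound on the primal gap for weakly convex functions over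
a polytope, via the pyramidal width. -/
theorem primal_gap_pyramidal_weakly_convex {n : ℕ}
    (V : Finset (EuclideanSpace ℝ (Fin n))) (hV : V.Nonempty)
    (P : Set (EuclideanSpace ℝ (Fin n)))
    (hPdef : P = convexHull ℝ (V : Set (EuclideanSpace ℝ (Fin n))))
    (δ : ℝ) (hδ : 0 < δ)
    -- `δ` is (a lower bound on) the pyramidal width of the polytope `P`:
    (hpw : ∀ ψ : EuclideanSpace ℝ (Fin n),
      ∀ S : Finset (EuclideanSpace ℝ (Fin n)), S ⊆ V →
      ∀ x' ∈ convexHull ℝ (S : Set (EuclideanSpace ℝ (Fin n))), ∀ y ∈ P, x' ≠ y →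
      ∀ vFW ∈ P, (∀ w ∈ P, ⟪ψ, vFW⟫ ≤ ⟪ψ, w⟫) →
      ∀ vA ∈ S, (∀ w ∈ S, ⟪ψ, w⟫ ≤ ⟪ψ, vA⟫) →
        δ * ⟪ψ, x' - y⟫ / ‖x' - y‖ ≤ ⟪ψ, vA - vFW⟫)
    (f : EuclideanSpace ℝ (Fin n) → ℝ)
    (f' : EuclideanSpace ℝ (Fin n) → EuclideanSpace ℝ (Fin n))
    (hf' : ∀ x ∈ P, HasGradientAt f (f' x) x)
    (ρ μ ζ : ℝ) (hρ : 0 ≤ ρ) (hμ : 0 < μ) (hρμ : ρ / μ < 1) (hζ : 0 < ζ)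
    (hweak : ∀ x ∈ P, ∀ y ∈ P, f y - f x ≥ ⟪f' x, y - x⟫ - (ρ / 2) * ‖y - x‖ ^ 2)
    (xstar : EuclideanSpace ℝ (Fin n)) (hxstar : xstar ∈ P)
    (hmin : IsMinOn f P xstar)
    (hqg : ∀ x ∈ P, f x ≤ f xstar + ζ →
      ‖x - xstar‖ ^ 2 ≤ (2 / μ) * (f x - f xstar))
    (S : Finset (EuclideanSpace ℝ (Fin n))) (hS : S ⊆ V)
    (x : EuclideanSpace ℝ (Fin n))
    (hxS : x ∈ convexHull ℝ (S : Set (EuclideanSpace ℝ (Fin n))))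
    (vFW : EuclideanSpace ℝ (Fin n)) (hvFW : vFW ∈ P)
    (hvFWmin : ∀ w ∈ P, ⟪f' x, vFW⟫ ≤ ⟪f' x, w⟫)
    (vA : EuclideanSpace ℝ (Fin n)) (hvA : vA ∈ S)
    (hvAmax : ∀ w ∈ S, ⟪f' x, w⟫ ≤ ⟪f' x, vA⟫) :
    x ∈ P → f x ≤ f xstar + ζ →
      f x - f xstar ≤
        (2 * μ / ((μ - ρ) ^ 2 * δ ^ 2)) * ⟪f' x, vA - vFW⟫ ^ 2 :=
  primal_gap_pyramidal_weakly_convex_general V P δ hδ hpw f f' ρ μ ζ hρ hμ hρμ hweak xstar hxstar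
    hqg S hS x hxS vFW hvFW hvFWmin vA hvA hvAmax
end

section
/- Let P be a polytope with pyramidal width δ > 0 and f a convex C¹ function satisfying the Hölder error bound condition with parameters q > 1 and μ > 0 over P. Let x ∈ conv S for S ⊆ vertices of P, v^FW = argmin_{v∈P}⟨∇f(x), v⟩, and v^A = argmax_{v∈S}⟨∇f(x), v⟩. Then f(x) − f* ≤ (q/μ)^{1/(q−1)} · (⟨∇f(x), v^A − v^FW⟩/δ)^{q/(q−1)}. -/
/-!
Let `y` be a minimizer of `f` nearest to `x`. Convexity gives `f x - f* ≤ ⟪∇f x, x - y⟫`, and the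
pyramidal width bounds this by `⟪∇f x, vA - vFW⟫ / δ * ‖x - y‖`. The Hölder error bound
`‖x - y‖ ^ q ≤ (q / μ) (f x - f*)` then turns this into a bound of `(f x - f*) ^ (q - 1)`.
-/

open Set Metric
open scoped RealInnerProductSpace

theorem ConvexOn.add_fderiv_sub_le {E : Type*} [NormedAddCommGroup E] [NormedSpace ℝ E]
    {s : Set E} {f : E → ℝ} {f' : E →L[ℝ] ℝ} {x y : E} (hf : ConvexOn ℝ s f)
    (hx : x ∈ s) (hy : y ∈ s) (hf' : HasFDerivAt f f' x) :
    f x + f' (y - x) ≤ f y := by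
  have hline : HasDerivAt (f ∘ AffineMap.lineMap (k := ℝ) x y) (f' (y - x)) (0 : ℝ) := by
    have := hf'.comp_hasDerivAt_of_eq (0 : ℝ) (AffineMap.hasDerivAt_lineMap (a := x) (b := y))
      (by simp)
    simpa using this
  have := (hf.comp_affineMap (AffineMap.lineMap (k := ℝ) x y)).le_slope_of_hasDerivAt
    (by simpa using hx) (by simpa using hy) zero_lt_one hline
  simp only [map_sub, slope_def_field, Function.comp_apply, AffineMap.lineMap_apply_one,
    AffineMap.lineMap_apply_zero, sub_zero, div_one] at this
  rw [map_sub]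
  linarith

theorem IsCompact.isCompact_setOf_isMinOn {X : Type*} [TopologicalSpace X] [T2Space X]
    {s : Set X} {f : X → ℝ} {a : X} (hs : IsCompact s) (hf : ContinuousOn f s)
    (ha : IsMinOn f s a) (has : a ∈ s) : IsCompact {y | y ∈ s ∧ IsMinOn f s y} := by
  have hmin : {y | y ∈ s ∧ IsMinOn f s y} = s ∩ f ⁻¹' Iic (f a) := by
    ext y
    refine ⟨fun ⟨hy, hymin⟩ => ⟨hy, hymin has⟩, fun ⟨hy, hya⟩ => ⟨hy, fun z hz => ?_⟩⟩
    exact hya.trans (isMinOn_iff.mp ha z hz)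
  rw [hmin]
  exact hs.of_isClosed_subset (hf.preimage_isClosed_of_isClosed hs.isClosed isClosed_Iic)
    inter_subset_left

theorem le_rpow_mul_rpow_of_le_mul_of_rpow_le_mul {h c d A q : ℝ} (hh : 0 ≤ h) (hc : 0 ≤ c)
    (hd : 0 ≤ d) (hA : 0 ≤ A) (hq : 1 < q) (hhd : h ≤ c * d) (hdh : d ^ q ≤ A * h) :
    h ≤ A ^ (1 / (q - 1)) * c ^ (q / (q - 1)) := by
  rcases hh.eq_or_lt with rfl | hpos
  · positivity
  have hpow : h ^ (q - 1) ≤ c ^ q * A := by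
    have : h ^ q ≤ c ^ q * A * h := calc
      h ^ q ≤ (c * d) ^ q := by gcongr
      _ = c ^ q * d ^ q := Real.mul_rpow hc hd
      _ ≤ c ^ q * (A * h) := by gcongr
      _ = c ^ q * A * h := by ring
    rwa [Real.rpow_sub_one hpos.ne', div_le_iff₀ hpos]
  calc h = (h ^ (q - 1)) ^ (1 / (q - 1)) := by
        rw [← Real.rpow_mul hh, mul_one_div_cancel (by linarith), Real.rpow_one]
    _ ≤ (c ^ q * A) ^ (1 / (q - 1)) := by gcongr
    _ = A ^ (1 / (q - 1)) * c ^ (q / (q - 1)) := by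
        rw [Real.mul_rpow (by positivity) hA, ← Real.rpow_mul hc, mul_one_div, mul_comm]

theorem geometric_heb_general {n : ℕ}
    (V : Finset (EuclideanSpace ℝ (Fin n)))
    (P : Set (EuclideanSpace ℝ (Fin n)))
    (hPdef : P = convexHull ℝ (V : Set (EuclideanSpace ℝ (Fin n))))
    (δ : ℝ) (hδ : 0 < δ)
    (hpw : ∀ ψ : EuclideanSpace ℝ (Fin n),
      ∀ S : Finset (EuclideanSpace ℝ (Fin n)), S ⊆ V →
      ∀ x' ∈ convexHull ℝ (S : Set (EuclideanSpace ℝ (Fin n))), ∀ y ∈ P, x' ≠ y →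
      ∀ vFW ∈ P, (∀ w ∈ P, ⟪ψ, vFW⟫ ≤ ⟪ψ, w⟫) →
      ∀ vA ∈ S, (∀ w ∈ S, ⟪ψ, w⟫ ≤ ⟪ψ, vA⟫) →
        δ * ⟪ψ, x' - y⟫ / ‖x' - y‖ ≤ ⟪ψ, vA - vFW⟫)
    (f : EuclideanSpace ℝ (Fin n) → ℝ)
    (f' : EuclideanSpace ℝ (Fin n) → EuclideanSpace ℝ (Fin n))
    (hf : ConvexOn ℝ P f)
    (hf' : ∀ x ∈ P, HasGradientAt f (f' x) x)
    (q μ : ℝ) (hq : 1 < q) (hμ : 0 < μ)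
    (xstar : EuclideanSpace ℝ (Fin n)) (hxstar : xstar ∈ P)
    (hmin : IsMinOn f P xstar)
    (heb : ∀ x ∈ P,
      (infDist x {y | y ∈ P ∧ IsMinOn f P y}) ^ q ≤ (q / μ) * (f x - f xstar))
    (S : Finset (EuclideanSpace ℝ (Fin n))) (hS : S ⊆ V)
    (x : EuclideanSpace ℝ (Fin n))
    (hxS : x ∈ convexHull ℝ (S : Set (EuclideanSpace ℝ (Fin n))))
    (vFW : EuclideanSpace ℝ (Fin n)) (hvFW : vFW ∈ P)
    (hvFWmin : ∀ w ∈ P, ⟪f' x, vFW⟫ ≤ ⟪f' x, w⟫)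
    (vA : EuclideanSpace ℝ (Fin n)) (hvA : vA ∈ S)
    (hvAmax : ∀ w ∈ S, ⟪f' x, w⟫ ≤ ⟪f' x, vA⟫) :
    x ∈ P →
      f x - f xstar ≤
        (q / μ) ^ (1 / (q - 1)) * (⟪f' x, vA - vFW⟫ / δ) ^ (q / (q - 1)) := by
  intro hxP
  set ψ := f' x
  have hPcompact : IsCompact P := hPdef ▸ V.finite_toSet.isCompact_convexHull ℝ
  have hfcont : ContinuousOn f P := fun z hz =>
    (hf' z hz).differentiableAt.continuousAt.continuousWithinAt
  obtain ⟨y, ⟨hyP, hymin⟩, hxy⟩ :=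
    (hPcompact.isCompact_setOf_isMinOn hfcont hmin hxstar).exists_infDist_eq_dist
      ⟨xstar, hxstar, hmin⟩ x
  have hfy : f y = f xstar := le_antisymm (hymin hxstar) (hmin hyP)
  have hvAP : vA ∈ P := hPdef ▸ subset_convexHull ℝ _ (hS hvA)
  have hwidth : 0 ≤ ⟪ψ, vA - vFW⟫ / δ := by
    have := hvFWmin vA hvAP
    rw [inner_sub_right]
    exact div_nonneg (by linarith) hδ.le
  have hgap : f x - f xstar ≤ ⟪ψ, vA - vFW⟫ / δ * dist x y := by
    rcases eq_or_ne x y with rfl | hne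
    · simp [hfy]
    have hdescent : f x - f xstar ≤ ⟪ψ, x - y⟫ := by
      have := hf.add_fderiv_sub_le hxP hyP (hf' x hxP).hasFDerivAt
      rw [InnerProductSpace.toDual_apply_apply, ← neg_sub x y, inner_neg_right] at this
      linarith
    have hpyr := hpw ψ S hS x hxS y hyP hne vFW hvFW hvFWmin vA hvA hvAmax
    rw [div_le_iff₀ (norm_pos_iff.mpr (sub_ne_zero.mpr hne))] at hpyr
    rw [dist_eq_norm, div_mul_eq_mul_div, le_div_iff₀ hδ]
    linarith [mul_le_mul_of_nonneg_right hdescent hδ.le]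
  exact le_rpow_mul_rpow_of_le_mul_of_rpow_le_mul (sub_nonneg.mpr (hmin hxP)) hwidth
    dist_nonneg (div_pos (by linarith) hμ).le hq hgap (hxy ▸ heb x hxP)

/-- geometric Hölder error bound: upper bound on the primal gap over a
polytope via the pyramidal width and the Hölder error bound condition. -/
theorem geometric_heb {n : ℕ}
    (V : Finset (EuclideanSpace ℝ (Fin n))) (hV : V.Nonempty)
    (P : Set (EuclideanSpace ℝ (Fin n)))
    (hPdef : P = convexHull ℝ (V : Set (EuclideanSpace ℝ (Fin n))))
    (δ : ℝ) (hδ : 0 < δ)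
    (hpw : ∀ ψ : EuclideanSpace ℝ (Fin n),
      ∀ S : Finset (EuclideanSpace ℝ (Fin n)), S ⊆ V →
      ∀ x' ∈ convexHull ℝ (S : Set (EuclideanSpace ℝ (Fin n))), ∀ y ∈ P, x' ≠ y →
      ∀ vFW ∈ P, (∀ w ∈ P, ⟪ψ, vFW⟫ ≤ ⟪ψ, w⟫) →
      ∀ vA ∈ S, (∀ w ∈ S, ⟪ψ, w⟫ ≤ ⟪ψ, vA⟫) →
        δ * ⟪ψ, x' - y⟫ / ‖x' - y‖ ≤ ⟪ψ, vA - vFW⟫)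
    (f : EuclideanSpace ℝ (Fin n) → ℝ)
    (f' : EuclideanSpace ℝ (Fin n) → EuclideanSpace ℝ (Fin n))
    (hf : ConvexOn ℝ P f)
    (hf' : ∀ x ∈ P, HasGradientAt f (f' x) x)
    (q μ : ℝ) (hq : 1 < q) (hμ : 0 < μ)
    (xstar : EuclideanSpace ℝ (Fin n)) (hxstar : xstar ∈ P)
    (hmin : IsMinOn f P xstar)
    (heb : ∀ x ∈ P,
      (infDist x {y | y ∈ P ∧ IsMinOn f P y}) ^ q ≤ (q / μ) * (f x - f xstar))
    (S : Finset (EuclideanSpace ℝ (Fin n))) (hS : S ⊆ V)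
    (x : EuclideanSpace ℝ (Fin n))
    (hxS : x ∈ convexHull ℝ (S : Set (EuclideanSpace ℝ (Fin n))))
    (vFW : EuclideanSpace ℝ (Fin n)) (hvFW : vFW ∈ P)
    (hvFWmin : ∀ w ∈ P, ⟪f' x, vFW⟫ ≤ ⟪f' x, w⟫)
    (vA : EuclideanSpace ℝ (Fin n)) (hvA : vA ∈ S)
    (hvAmax : ∀ w ∈ S, ⟪f' x, w⟫ ≤ ⟪f' x, vA⟫) :
    x ∈ P →
      f x - f xstar ≤
        (q / μ) ^ (1 / (q - 1)) * (⟪f' x, vA - vFW⟫ / δ) ^ (q / (q - 1)) :=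
  geometric_heb_general V P hPdef δ hδ hpw f f' hf hf' q μ hq hμ xstar hxstar hmin heb S hS x hxS
    vFW hvFW hvFWmin vA hvA hvAmax
end
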